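/- arXiv:0805.1252 — 3 statements merged into one kernel-verified Lean document; each statement's English description precedes it below -/
import Mathlib

section
/- Let n ≥ 1 and let Φ_A = {±e_i : 1 ≤ i ≤ n} ∪ {±(e_j − e_k) : 1 ≤ j ≠ k ≤ n} be the set of roots of type A_n in ℝ^n, with dual lattice M = ℤ^n. Let F = {u ∈ ℝ^n : −1 ≤ ⟨u, v⟩ ≤ 1 for all v ∈ Φ_A}. Then for every integer q ≥ 2 and every w ∈ (1/q)M, there exists u ∈ (1/q)M with u − w ∈ M and u lying in the topological interior of F. (Consequently, every lattice polytope cut out by A_n is diagonally split for every q ≥ 2.) -/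
/-!
Take the coordinatewise fractional part `u = fract w`. It differs from `w` by an integer vector,
so it stays in `(1/q)ℤ^n` and represents the class of `w`. Its coordinates lie in `[0, 1)`, hence
all `|uᵢ|` and `|uⱼ - uₖ|` are `< 1`; these strict inequalities cut out an open set inside the
polytope of `A_n`, so `u` is an interior point.
-/

open Finset

/-- The `i`-th standard basis vector of `ℝ^n`. -/
noncomputable def stdBasis (n : ℕ) (i : Fin n) : Fin n → ℝ := fun j => if j = i then 1 else 0

/-- The standard inner product on `ℝ^n`. -/
noncomputable def innerProd {n : ℕ} (u v : Fin n → ℝ) : ℝ := ∑ i, u i * v i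

/-- The roots of type `A_n`: `±e_i` and `±(e_j - e_k)` for `j ≠ k`. -/
def typeA (n : ℕ) : Set (Fin n → ℝ) :=
  {v | ∃ i, v = stdBasis n i ∨ v = -stdBasis n i} ∪
  {v | ∃ j k, j ≠ k ∧ v = stdBasis n j - stdBasis n k}

/-- The lattice `ℤ^n ⊆ ℝ^n`. -/
def intLattice (n : ℕ) : Set (Fin n → ℝ) := {u | ∀ i, ∃ m : ℤ, u i = m}

/-- The diagonal splitting polytope `F = {u | -1 ≤ ⟨u,v⟩ ≤ 1 for all v ∈ Φ}`. -/
def splitPolytope (n : ℕ) (Φ : Set (Fin n → ℝ)) : Set (Fin n → ℝ) :=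
  {u | ∀ v ∈ Φ, -1 ≤ innerProd u v ∧ innerProd u v ≤ 1}

lemma innerProd_stdBasis {n : ℕ} (u : Fin n → ℝ) (i : Fin n) :
    innerProd u (stdBasis n i) = u i := by
  simp [innerProd, stdBasis]

lemma innerProd_neg {n : ℕ} (u v : Fin n → ℝ) : innerProd u (-v) = -innerProd u v := by
  simp [innerProd]

lemma innerProd_sub {n : ℕ} (u v v' : Fin n → ℝ) :
    innerProd u (v - v') = innerProd u v - innerProd u v' := by
  simp [innerProd, mul_sub]

lemma mem_splitPolytope_typeA {n : ℕ} {x : Fin n → ℝ} (hx : ∀ i, |x i| ≤ 1)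
    (hxx : ∀ j k, |x j - x k| ≤ 1) : x ∈ splitPolytope n (typeA n) := by
  rintro v (⟨i, rfl | rfl⟩ | ⟨j, k, -, rfl⟩)
  · rw [innerProd_stdBasis]
    exact abs_le.mp (hx i)
  · rw [innerProd_neg, innerProd_stdBasis, neg_le_neg_iff, neg_le]
    exact (abs_le.mp (hx i)).symm
  · rw [innerProd_sub, innerProd_stdBasis, innerProd_stdBasis]
    exact abs_le.mp (hxx j k)

lemma isOpen_setOf_abs_lt_one_and_abs_sub_lt_one (n : ℕ) :
    IsOpen {x : Fin n → ℝ | (∀ i, |x i| < 1) ∧ ∀ j k, |x j - x k| < 1} := by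
  simp only [Set.ofPred_and, Set.ofPred_forall]
  exact (isOpen_iInter_of_finite fun i => isOpen_lt (by fun_prop) continuous_const).inter
    (isOpen_iInter_of_finite fun j => isOpen_iInter_of_finite fun k =>
      isOpen_lt (by fun_prop) continuous_const)

lemma mem_interior_splitPolytope_typeA {n : ℕ} {x : Fin n → ℝ} (hx : ∀ i, |x i| < 1)
    (hxx : ∀ j k, |x j - x k| < 1) : x ∈ interior (splitPolytope n (typeA n)) :=
  interior_maximal (fun _ hy => mem_splitPolytope_typeA (fun i => (hy.1 i).le)
    (fun j k => (hy.2 j k).le)) (isOpen_setOf_abs_lt_one_and_abs_sub_lt_one n) ⟨hx, hxx⟩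

lemma fract_mem_interior_splitPolytope_typeA {n : ℕ} (w : Fin n → ℝ) :
    (fun i => Int.fract (w i)) ∈ interior (splitPolytope n (typeA n)) := by
  refine mem_interior_splitPolytope_typeA (fun i => ?_) (fun j k => ?_)
  · rw [abs_lt]
    exact ⟨by linarith [Int.fract_nonneg (w i)], Int.fract_lt_one (w i)⟩
  · rw [abs_sub_lt_iff]
    constructor <;> linarith [Int.fract_nonneg (w j), Int.fract_lt_one (w j),
      Int.fract_nonneg (w k), Int.fract_lt_one (w k)]

lemma fract_sub_mem_intLattice {n : ℕ} (w : Fin n → ℝ) :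
    (fun i => Int.fract (w i)) - w ∈ intLattice n :=
  fun i => ⟨-⌊w i⌋, by simp [Int.fract_sub_self]⟩

lemma smul_fract_mem_intLattice {n : ℕ} (q : ℤ) {w : Fin n → ℝ}
    (hw : (q : ℝ) • w ∈ intLattice n) : (q : ℝ) • (fun i => Int.fract (w i)) ∈ intLattice n := by
  intro i
  obtain ⟨m, hm⟩ := hw i
  refine ⟨m - q * ⌊w i⌋, ?_⟩
  simp only [Pi.smul_apply, smul_eq_mul] at hm ⊢
  push_cast
  rw [Int.fract, mul_sub, hm]

theorem typeA_diagonally_split_general (n : ℕ) (q : ℤ)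
    (w : Fin n → ℝ) (hw : (q : ℝ) • w ∈ intLattice n) :
    ∃ u : Fin n → ℝ, (q : ℝ) • u ∈ intLattice n ∧ u - w ∈ intLattice n ∧
      u ∈ interior (splitPolytope n (typeA n)) :=
  ⟨fun i => Int.fract (w i), smul_fract_mem_intLattice q hw, fract_sub_mem_intLattice w,
    fract_mem_interior_splitPolytope_typeA w⟩

/-- Every lattice polytope cut out by `A_n` is diagonally split for every `q ≥ 2`:
the interior of the diagonal splitting polytope of `A_n` contains a representative of
every equivalence class in `(1/q)ℤ^n / ℤ^n`. -/
theorem typeA_diagonally_split (n : ℕ) (hn : 1 ≤ n) (q : ℤ) (hq : 2 ≤ q)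
    (w : Fin n → ℝ) (hw : (q : ℝ) • w ∈ intLattice n) :
    ∃ u : Fin n → ℝ, (q : ℝ) • u ∈ intLattice n ∧ u - w ∈ intLattice n ∧
      u ∈ interior (splitPolytope n (typeA n)) :=
  typeA_diagonally_split_general n q w hw
end

section
/- Let n ≥ 1 and let Φ_C = {±2e_i : 1 ≤ i ≤ n} ∪ {±e_j ± e_k : 1 ≤ j < k ≤ n} (all four sign combinations) be the set of roots of type C_n in ℝ^n, whose root lattice is the even sublattice N = {a ∈ ℤ^n : a_1 + ⋯ + a_n is even} and whose dual lattice is M = ℤ^n + ℤ·(1/2, …, 1/2). Let F = {u ∈ ℝ^n : −1 ≤ ⟨u, v⟩ ≤ 1 for all v ∈ Φ_C}. Then for every odd integer q ≥ 3 and every w ∈ (1/q)M, there exists u ∈ (1/q)M with u − w ∈ M and u lying in the topological interior of F. (Consequently, every lattice polytope cut out by C_n is diagonally split for every odd q.) -/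
open Finset

/-- The roots of type `C_n`: `±2e_i` and `±e_j ± e_k` for `j < k` (all four sign choices). -/
noncomputable def typeC (n : ℕ) : Set (Fin n → ℝ) :=
  {v | ∃ i, v = (2 : ℝ) • stdBasis n i ∨ v = -((2 : ℝ) • stdBasis n i)} ∪
  {v | ∃ j k, j < k ∧ ∃ ε δ : ℝ, (ε = 1 ∨ ε = -1) ∧ (δ = 1 ∨ δ = -1) ∧
    v = ε • stdBasis n j + δ • stdBasis n k}

/-- The lattice `M = ℤ^n + ℤ·(1/2, …, 1/2) ⊆ ℝ^n`, the union of `ℤ^n` and its translate by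
`(1/2, …, 1/2)`. -/
def halfLattice (n : ℕ) : Set (Fin n → ℝ) :=
  {u | (∀ i, ∃ m : ℤ, u i = m) ∨ (∀ i, ∃ m : ℤ, u i = m + 1/2)}

/-!
Reduce `w` modulo `M` coordinatewise to `u = x - round x`, where `x = w` if `q • w ∈ ℤ^n` and
`x = w + (1/2, …, 1/2)` otherwise; since `q` is odd, in both cases `q • x ∈ ℤ^n`. Every
coordinate of `u` is then a fraction with odd denominator `q`, so it is not `±1/2`, and
`|u i| < 1/2`. Each root of `C_n` has `ℓ¹`-norm `2`, so the open cube `|u i| < 1/2` lies in `F`.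
-/

lemma abs_sub_round_lt_half_of_odd {q : ℤ} (hq : Odd q) {x : ℝ} {m : ℤ} (hx : q * x = m) :
    |x - round x| < 1 / 2 := by
  refine (abs_sub_round x).lt_of_ne fun hhalf => ?_
  have hcast : ((2 * (m - q * round x) : ℤ) : ℝ) = q * (2 * (x - round x)) := by
    push_cast
    rw [← hx]
    ring
  have hpm : 2 * (m - q * round x) = q ∨ 2 * (m - q * round x) = -q := by
    rcases (abs_eq (by norm_num : (0 : ℝ) ≤ 1 / 2)).mp hhalf with h | h
    · exact Or.inl (by exact_mod_cast hcast.trans (by rw [h]; ring : _ = (q : ℝ)))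
    · exact Or.inr (by exact_mod_cast hcast.trans (by rw [h]; ring : _ = -(q : ℝ)))
  obtain ⟨k, rfl⟩ := hq
  omega

lemma innerProd_eq_dotProduct {n : ℕ} (u v : Fin n → ℝ) : innerProd u v = u ⬝ᵥ v := rfl

lemma stdBasis_eq_single (n : ℕ) (i : Fin n) : stdBasis n i = Pi.single i 1 := by
  ext j
  simp [stdBasis, Pi.single_apply]

lemma abs_innerProd_lt_one_of_mem_typeC {n : ℕ} {u v : Fin n → ℝ} (hu : ∀ i, |u i| < 1 / 2)
    (hv : v ∈ typeC n) : |innerProd u v| < 1 := by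
  rcases hv with ⟨i, rfl | rfl⟩ | ⟨j, k, -, ε, δ, hε, hδ, rfl⟩ <;>
  simp only [innerProd_eq_dotProduct, stdBasis_eq_single, dotProduct_smul, dotProduct_neg,
    dotProduct_add, dotProduct_single, smul_eq_mul, mul_one]
  · rw [abs_mul, abs_two]
    linarith [hu i]
  · rw [abs_neg, abs_mul, abs_two]
    linarith [hu i]
  · have abs_sign {s : ℝ} (hs : s = 1 ∨ s = -1) : |s| = 1 := by rcases hs with rfl | rfl <;> simp
    calc |ε * u j + δ * u k| ≤ |ε| * |u j| + |δ| * |u k| := by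
          simpa only [abs_mul] using abs_add_le (ε * u j) (δ * u k)
      _ < 1 := by rw [abs_sign hε, abs_sign hδ]; linarith [hu j, hu k]

lemma mem_ball_zero_iff_forall_abs_lt {n : ℕ} {u : Fin n → ℝ} {r : ℝ} (hr : 0 < r) :
    u ∈ Metric.ball 0 r ↔ ∀ i, |u i| < r := by
  simp only [mem_ball_zero_iff, pi_norm_lt_iff hr, Real.norm_eq_abs]

lemma ball_zero_half_subset_splitPolytope_typeC (n : ℕ) :
    Metric.ball (0 : Fin n → ℝ) (1 / 2) ⊆ splitPolytope n (typeC n) := fun _u hu _v hv =>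
  abs_le.mp (abs_innerProd_lt_one_of_mem_typeC
    ((mem_ball_zero_iff_forall_abs_lt (by norm_num)).mp hu) hv).le

lemma mem_interior_splitPolytope_typeC {n : ℕ} {u : Fin n → ℝ} (hu : ∀ i, |u i| < 1 / 2) :
    u ∈ interior (splitPolytope n (typeC n)) :=
  Metric.isOpen_ball.subset_interior_iff.mpr (ball_zero_half_subset_splitPolytope_typeC n)
    ((mem_ball_zero_iff_forall_abs_lt (by norm_num)).mpr hu)

lemma add_intCast_mem_halfLattice {n : ℕ} {c : Fin n → ℝ} (hc : c ∈ halfLattice n)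
    (z : Fin n → ℤ) : c + (fun i => (z i : ℝ)) ∈ halfLattice n := by
  rcases hc with hc | hc
  · left
    intro i
    obtain ⟨m, hm⟩ := hc i
    exact ⟨m + z i, by simp only [Pi.add_apply, hm, Int.cast_add]⟩
  · right
    intro i
    obtain ⟨m, hm⟩ := hc i
    exact ⟨m + z i, by simp only [Pi.add_apply, hm, Int.cast_add]; ring⟩

lemma exists_mem_halfLattice_mul_add_eq_intCast {n : ℕ} {q : ℤ} (hq : Odd q) {w : Fin n → ℝ}
    (hw : (q : ℝ) • w ∈ halfLattice n) :
    ∃ c ∈ halfLattice n, ∀ i, ∃ m : ℤ, q * (w i + c i) = m := by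
  rcases hw with hw | hw
  · refine ⟨0, Or.inl fun _ => ⟨0, by simp⟩, fun i => ?_⟩
    simpa using hw i
  · obtain ⟨k, rfl⟩ := hq
    refine ⟨fun _ => 1 / 2, Or.inr fun _ => ⟨0, by simp⟩, fun i => ?_⟩
    obtain ⟨m, hm⟩ := hw i
    simp only [Pi.smul_apply, smul_eq_mul] at hm
    exact ⟨m + k + 1, by push_cast at hm ⊢; linear_combination hm⟩

theorem typeC_diagonally_split_general (n : ℕ) (q : ℤ) (hodd : Odd q)
    (w : Fin n → ℝ) (hw : (q : ℝ) • w ∈ halfLattice n) :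
    ∃ u : Fin n → ℝ, (q : ℝ) • u ∈ halfLattice n ∧ u - w ∈ halfLattice n ∧
      u ∈ interior (splitPolytope n (typeC n)) := by
  obtain ⟨c, hc, hqx⟩ := exists_mem_halfLattice_mul_add_eq_intCast hodd hw
  choose m hm using hqx
  set x := w + c
  refine ⟨fun i => x i - round (x i), Or.inl fun i => ⟨m i - q * round (x i), ?_⟩, ?_,
    mem_interior_splitPolytope_typeC fun i => abs_sub_round_lt_half_of_odd hodd (hm i)⟩
  · simp only [Pi.smul_apply, smul_eq_mul, Int.cast_sub, Int.cast_mul, ← hm i, x, Pi.add_apply]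
    ring
  · convert add_intCast_mem_halfLattice hc (fun i => -round (x i)) using 1
    ext i
    simp only [Pi.sub_apply, Pi.add_apply, Int.cast_neg, x]
    ring

/-- Every lattice polytope cut out by `C_n` is diagonally split for every odd `q ≥ 3`:
the interior of the diagonal splitting polytope of `C_n` contains a representative of
every equivalence class in `(1/q)M / M`, where `M = ℤ^n + ℤ·(1/2,…,1/2)` is the dual of
the root lattice. -/
theorem typeC_diagonally_split (n : ℕ) (hn : 1 ≤ n) (q : ℤ) (hq : 3 ≤ q) (hodd : Odd q)
    (w : Fin n → ℝ) (hw : (q : ℝ) • w ∈ halfLattice n) :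
    ∃ u : Fin n → ℝ, (q : ℝ) • u ∈ halfLattice n ∧ u - w ∈ halfLattice n ∧
      u ∈ interior (splitPolytope n (typeC n)) :=
  typeC_diagonally_split_general n q hodd w hw
end

section
/- Let P ⊆ ℝ^3 be the convex hull of the four lattice points 0, (1,0,0), (0,0,1), and (1,2,1). Then the lattice point (1,1,1) lies in the dilate 2·P, but there do not exist lattice points a, b ∈ P ∩ ℤ^3 with a + b = (1,1,1). In particular, P is not a normal lattice polytope, even though P is the Cayley sum (with respect to the projection onto the third coordinate) of the two normal lattice segments [(0,0), (1,0)] and [(0,0), (1,2)] in ℝ^2. -/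
/-!
The inequalities `0 ≤ x₁`, `x₁ ≤ 2x₀`, `x₁ ≤ 2x₂` and `2x₀ + 2x₂ ≤ x₁ + 2` hold at the vertices
of `P`, hence on `P`. A lattice point of `P` with `x₁ = 1` would have `x₀, x₂ ≥ 1`, against the
last one; so second coordinates of lattice points of `P` are `0` or at least `2`, and `(1,1,1)`,
twice the barycentre of `P`, is not a sum of two of them.

A segment `[0, b]` with `b` integral and some `bᵢ = 1` is normal: a lattice point of `m • [0, b]`
is `k • b` with `k = xᵢ ∈ {0, …, m}`, i.e. `k` copies of `b` and `m - k` copies of `0`.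
The Cayley sum identity holds because affine maps commute with convex hulls.
-/

open Finset Pointwise

/-- A lattice polytope `P ⊆ ℝ^n` is normal if for every positive integer `m`, every
point of `ℤ^n` lying in the dilate `m·P` is a sum of `m` points of `ℤ^n ∩ P`. -/
def IsNormalPolytope (n : ℕ) (P : Set (Fin n → ℝ)) : Prop :=
  ∀ m : ℕ, 0 < m → ∀ x : Fin n → ℝ, (∀ i, ∃ k : ℤ, x i = k) → x ∈ (m : ℝ) • P →
    ∃ f : Fin m → (Fin n → ℝ), (∀ j, f j ∈ P ∧ ∀ i, ∃ k : ℤ, f j i = k) ∧ x = ∑ j, f j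

theorem not_isNormalPolytope_of_mem_two_smul {n : ℕ} {P : Set (Fin n → ℝ)} {x : Fin n → ℝ}
    (hx : ∀ i, ∃ k : ℤ, x i = k) (hxP : x ∈ (2 : ℝ) • P)
    (h : ¬ ∃ a b : Fin n → ℝ, a ∈ P ∧ b ∈ P ∧ (∀ i, ∃ k : ℤ, a i = k) ∧
      (∀ i, ∃ k : ℤ, b i = k) ∧ a + b = x) :
    ¬ IsNormalPolytope n P := by
  intro hP
  obtain ⟨f, hf, rfl⟩ := hP 2 two_pos x hx (mod_cast hxP)
  exact h ⟨f 0, f 1, (hf 0).1, (hf 1).1, (hf 0).2, (hf 1).2, (Fin.sum_univ_two f).symm⟩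

theorem isNormalPolytope_convexHull_zero_pair {n : ℕ} {b : Fin n → ℝ}
    (hb : ∀ i, ∃ k : ℤ, b i = k) {i₀ : Fin n} (hb₀ : b i₀ = 1) :
    IsNormalPolytope n (convexHull ℝ {0, b}) := by
  rintro m - x hx ⟨y, hy, rfl⟩
  rw [convexHull_pair, segment_eq_image', Set.mem_image] at hy
  obtain ⟨θ, ⟨hθ₀, hθ₁⟩, rfl⟩ := hy
  obtain ⟨k, hk⟩ := hx i₀
  simp only [zero_add, sub_zero, smul_smul, Pi.smul_apply, smul_eq_mul, hb₀, mul_one] at hk ⊢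
  have hk₀ : (0 : ℝ) ≤ k := hk ▸ by positivity
  have hkm : (k : ℝ) ≤ m := hk ▸ mul_le_of_le_one_right (Nat.cast_nonneg m) hθ₁
  lift k to ℕ using (mod_cast hk₀)
  refine ⟨fun j => if (j : ℕ) < k then b else 0, fun j => ?_, ?_⟩
  · dsimp only
    split_ifs
    · exact ⟨subset_convexHull ℝ _ (by simp), hb⟩
    · exact ⟨subset_convexHull ℝ _ (by simp), fun _ => ⟨0, by simp⟩⟩
  · rw [Finset.sum_ite, sum_const_zero, add_zero, sum_const, Fin.card_filter_val_lt,
      min_eq_right (mod_cast hkm), hk, Int.cast_natCast, Nat.cast_smul_eq_nsmul]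

theorem convexHull_image_union_image_convexHull {𝕜 E F : Type*} [Ring 𝕜] [PartialOrder 𝕜]
    [AddCommGroup E] [AddCommGroup F] [Module 𝕜 E] [Module 𝕜 F]
    (f g : E →ᵃ[𝕜] F) (s t : Set E) :
    convexHull 𝕜 (f '' convexHull 𝕜 s ∪ g '' convexHull 𝕜 t) = convexHull 𝕜 (f '' s ∪ g '' t) := by
  rw [f.image_convexHull, g.image_convexHull, convexHull_convexHull_union_left,
    convexHull_convexHull_union_right]

def liftAtHeight (t : ℝ) : (Fin 2 → ℝ) →ᵃ[ℝ] (Fin 3 → ℝ) where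
  toFun p := ![p 0, p 1, t]
  linear :=
    { toFun := fun p => ![p 0, p 1, 0]
      map_add' p q := by ext i; fin_cases i <;> simp
      map_smul' c p := by ext i; fin_cases i <;> simp }
  map_vadd' p v := by ext i; fin_cases i <;> simp

local notation "𝒫" => convexHull ℝ ({![0,0,0], ![1,0,0], ![0,0,1], ![1,2,1]} : Set (Fin 3 → ℝ))

theorem mem_facet_inequalities {a : Fin 3 → ℝ} (ha : a ∈ 𝒫) :
    0 ≤ a 1 ∧ a 1 ≤ 2 * a 0 ∧ a 1 ≤ 2 * a 2 ∧ 2 * a 0 + 2 * a 2 ≤ a 1 + 2 := by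
  refine convexHull_min (t := {p | 0 ≤ p 1 ∧ p 1 ≤ 2 * p 0 ∧ p 1 ≤ 2 * p 2 ∧
    2 * p 0 + 2 * p 2 ≤ p 1 + 2}) ?_ ?_ ha
  · rintro p (rfl | rfl | rfl | rfl) <;> norm_num [Matrix.cons_val_two]
  · rintro x ⟨hx₁, hx₂, hx₃, hx₄⟩ y ⟨hy₁, hy₂, hy₃, hy₄⟩ s t hs ht hst
    simp only [Set.mem_ofPred_eq, Pi.add_apply, Pi.smul_apply, smul_eq_mul]
    refine ⟨by positivity, by nlinarith, by nlinarith, by nlinarith⟩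

theorem lattice_mem_coord_one_eq_zero_or_two_le {a : Fin 3 → ℝ} (ha : a ∈ 𝒫) {k : Fin 3 → ℤ}
    (hk : ∀ i, a i = k i) : k 1 = 0 ∨ 2 ≤ k 1 := by
  have h := mem_facet_inequalities ha
  simp only [hk] at h
  have : 0 ≤ k 1 ∧ k 1 ≤ 2 * k 0 ∧ k 1 ≤ 2 * k 2 ∧ 2 * k 0 + 2 * k 2 ≤ k 1 + 2 := by
    exact_mod_cast h
  omega

theorem not_exists_lattice_add_eq_one_one_one :
    ¬ ∃ a b : Fin 3 → ℝ, a ∈ 𝒫 ∧ b ∈ 𝒫 ∧ (∀ i, ∃ k : ℤ, a i = k) ∧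
      (∀ i, ∃ k : ℤ, b i = k) ∧ a + b = ![1,1,1] := by
  rintro ⟨a, b, ha, hb, ha', hb', hab⟩
  choose k hk using ha'
  choose l hl using hb'
  have hsum : k 1 + l 1 = 1 := by
    have := congrFun hab 1
    simp only [Pi.add_apply, hk, hl, Matrix.cons_val_one, Matrix.cons_val_zero] at this
    exact_mod_cast this
  have := lattice_mem_coord_one_eq_zero_or_two_le ha hk
  have := lattice_mem_coord_one_eq_zero_or_two_le hb hl
  omega

theorem one_one_one_mem_two_smul : ![1,1,1] ∈ (2 : ℝ) • 𝒫 := by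
  have hmid : ∀ x ∈ 𝒫, ∀ y ∈ 𝒫, (1/2 : ℝ) • x + (1/2 : ℝ) • y ∈ 𝒫 := fun x hx y hy =>
    convex_convexHull ℝ _ hx hy (by norm_num) (by norm_num) (by norm_num)
  have hvert : ∀ v ∈ ({![0,0,0], ![1,0,0], ![0,0,1], ![1,2,1]} : Set (Fin 3 → ℝ)), v ∈ 𝒫 :=
    fun _ => (subset_convexHull ℝ _ ·)
  refine ⟨_, hmid _ (hmid _ (hvert ![0,0,0] (by simp)) _ (hvert ![1,2,1] (by simp)))
    _ (hmid _ (hvert ![1,0,0] (by simp)) _ (hvert ![0,0,1] (by simp))), ?_⟩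
  ext i; fin_cases i <;> norm_num

theorem eq_cayleySum_liftAtHeight :
    𝒫 = convexHull ℝ (liftAtHeight 0 '' convexHull ℝ {![0,0], ![1,0]} ∪
      liftAtHeight 1 '' convexHull ℝ {![0,0], ![1,2]}) := by
  rw [convexHull_image_union_image_convexHull, Set.image_pair, Set.image_pair]
  show 𝒫 = convexHull ℝ ({![0,0,0], ![1,0,0]} ∪ {![0,0,1], ![1,2,1]})
  rw [Set.insert_union, Set.singleton_union]

/-- Let `P ⊆ ℝ³` be the convex hull of `0`, `(1,0,0)`, `(0,0,1)`, `(1,2,1)`.  Then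
`(1,1,1)` lies in `2·P` but is not a sum of two lattice points of `P`; in particular `P`
is not normal, even though `P` is the Cayley sum (with respect to the projection to the
third coordinate) of the two segments `[(0,0),(1,0)]` and `[(0,0),(1,2)]` in `ℝ²`, both
of which are normal. -/
theorem cayley_sum_of_normal_not_normal (P : Set (Fin 3 → ℝ))
    (hP : P = convexHull ℝ {![0,0,0], ![1,0,0], ![0,0,1], ![1,2,1]})
    (Q₁ Q₂ : Set (Fin 2 → ℝ))
    (hQ₁ : Q₁ = convexHull ℝ {![0,0], ![1,0]})
    (hQ₂ : Q₂ = convexHull ℝ {![0,0], ![1,2]}) :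
    ![1,1,1] ∈ (2 : ℝ) • P ∧
    (¬ ∃ a b : Fin 3 → ℝ, a ∈ P ∧ b ∈ P ∧ (∀ i, ∃ k : ℤ, a i = k) ∧
      (∀ i, ∃ k : ℤ, b i = k) ∧ a + b = ![1,1,1]) ∧
    ¬ IsNormalPolytope 3 P ∧
    P = convexHull ℝ
      ((fun p : Fin 2 → ℝ => ![p 0, p 1, 0]) '' Q₁ ∪ (fun p : Fin 2 → ℝ => ![p 0, p 1, 1]) '' Q₂) ∧
    IsNormalPolytope 2 Q₁ ∧ IsNormalPolytope 2 Q₂ := by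
  subst hP hQ₁ hQ₂
  have hzero : (![0, 0] : Fin 2 → ℝ) = 0 := by ext i; fin_cases i <;> rfl
  refine ⟨one_one_one_mem_two_smul, not_exists_lattice_add_eq_one_one_one,
    not_isNormalPolytope_of_mem_two_smul (fun i => ⟨1, by fin_cases i <;> simp⟩)
      one_one_one_mem_two_smul not_exists_lattice_add_eq_one_one_one,
    eq_cayleySum_liftAtHeight, ?_, ?_⟩ <;> rw [hzero]
  · refine isNormalPolytope_convexHull_zero_pair (fun i => ?_) (i₀ := 0) rfl
    fin_cases i
    exacts [⟨1, by simp⟩, ⟨0, by simp⟩]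
  · refine isNormalPolytope_convexHull_zero_pair (fun i => ?_) (i₀ := 0) rfl
    fin_cases i
    exacts [⟨1, by simp⟩, ⟨2, by simp⟩]
end
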